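/- arXiv:1902.01272 — 5 statements merged into one kernel-verified Lean document; each statement's English description precedes it below -/
import Mathlib

section
/- Let f : ℝⁿ → ℝ be differentiable and suppose that for a fixed coordinate i there is L_i > 0 with |∂_i f(x + h e_i) − ∂_i f(x)| ≤ L_i |h| for all x ∈ ℝⁿ and h ∈ ℝ. Then for every x ∈ ℝⁿ and every t ≥ 0, min( f(x + t e_i), f(x − t e_i) ) ≤ f(x) − t·|∂_i f(x)| + (L_i/2)·t². -/
/-- One-direction descent lemma. -/
lemma coordinate_descent_aux
    (n : ℕ) (f : (Fin n → ℝ) → ℝ) (hf : Differentiable ℝ f)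
    (L : ℝ) (hL : 0 < L) (v : Fin n → ℝ)
    (hlip : ∀ (x : Fin n → ℝ) (h : ℝ),
      |fderiv ℝ f (x + h • v) v - fderiv ℝ f x v| ≤ L * |h|) :
    ∀ (x : Fin n → ℝ) (t : ℝ), 0 ≤ t →
      f (x + t • v) ≤ f x + t * fderiv ℝ f x v + (L / 2) * t ^ 2 := by
  intro x t ht
  set φ : ℝ → ℝ := fun s => fderiv ℝ f (x + s • v) v with hφ
  have hderiv : ∀ s : ℝ, HasDerivAt (fun u : ℝ => f (x + u • v)) (φ s) s := by
    intro s
    have h1 : HasDerivAt (fun u : ℝ => x + u • v) v s := by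
      simpa using ((hasDerivAt_id s).smul_const v).const_add x
    have := ((hf (x + s • v)).hasFDerivAt).comp_hasDerivAt s h1
    exact this
  have hlipφ : LipschitzWith (Real.toNNReal L) φ := by
    apply LipschitzWith.of_dist_le_mul
    intro a b
    have := hlip (x + b • v) (a - b)
    have hab : x + b • v + (a - b) • v = x + a • v := by
      rw [sub_smul]; abel
    rw [hab] at this
    simpa [Real.dist_eq, Real.coe_toNNReal _ hL.le] using this
  have hcont : Continuous φ := hlipφ.continuous
  have hint : IntervalIntegrable φ MeasureTheory.volume 0 t :=
    hcont.intervalIntegrable 0 t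
  have heq : ∫ s in (0:ℝ)..t, φ s = f (x + t • v) - f (x + (0:ℝ) • v) :=
    intervalIntegral.integral_eq_sub_of_hasDerivAt (fun s _ => hderiv s)
      hint
  have hbound : ∫ s in (0:ℝ)..t, (φ s - φ 0) ≤ ∫ s in (0:ℝ)..t, L * s := by
    apply intervalIntegral.integral_mono_on ht
    · exact (hcont.sub continuous_const).intervalIntegrable 0 t
    · exact (continuous_const.mul continuous_id).intervalIntegrable 0 t
    · intro s hs
      have hs0 : 0 ≤ s := hs.1
      have := hlip x s
      have h0 : x + (0:ℝ) • v = x := by simp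
      have : |φ s - φ 0| ≤ L * |s| := by simpa [hφ, h0] using hlip x s
      calc φ s - φ 0 ≤ |φ s - φ 0| := le_abs_self _
        _ ≤ L * |s| := this
        _ = L * s := by rw [abs_of_nonneg hs0]
  have hval : ∫ s in (0:ℝ)..t, L * s = (L / 2) * t ^ 2 := by
    rw [intervalIntegral.integral_const_mul, integral_id]
    ring
  have hsplit : ∫ s in (0:ℝ)..t, (φ s - φ 0)
      = (∫ s in (0:ℝ)..t, φ s) - t * φ 0 := by
    rw [intervalIntegral.integral_sub hint
      (intervalIntegrable_const (μ := MeasureTheory.volume) (a := 0) (b := t) (c := φ 0))]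
    simp [mul_comm]
  have h0 : x + (0:ℝ) • v = x := by simp
  have : f (x + t • v) - f x - t * φ 0 ≤ (L / 2) * t ^ 2 := by
    rw [← hval]
    calc f (x + t • v) - f x - t * φ 0
        = (∫ s in (0:ℝ)..t, φ s) - t * φ 0 := by rw [heq, h0]
      _ = ∫ s in (0:ℝ)..t, (φ s - φ 0) := hsplit.symm
      _ ≤ ∫ s in (0:ℝ)..t, L * s := hbound
  have hφ0 : φ 0 = fderiv ℝ f x v := by simp [hφ]
  linarith [this, hφ0 ▸ this]

/-- Two-sided coordinate descent lemma: under a coordinate-wise Lipschitz gradient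
assumption along `eᵢ`,
`min(f(x + t eᵢ), f(x − t eᵢ)) ≤ f(x) − t·|∂ᵢf(x)| + (Lᵢ/2)t²` for `t ≥ 0`. -/
theorem coordinate_two_sided_descent
    (n : ℕ) (f : (Fin n → ℝ) → ℝ) (hf : Differentiable ℝ f)
    (i : Fin n) (L : ℝ) (hL : 0 < L)
    (hlip : ∀ (x : Fin n → ℝ) (h : ℝ),
      |fderiv ℝ f (x + h • (Pi.single i 1 : Fin n → ℝ)) ((Pi.single i 1 : Fin n → ℝ))
          - fderiv ℝ f x ((Pi.single i 1 : Fin n → ℝ))| ≤ L * |h|) :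
    ∀ (x : Fin n → ℝ) (t : ℝ), 0 ≤ t →
      min (f (x + t • (Pi.single i 1 : Fin n → ℝ))) (f (x - t • (Pi.single i 1 : Fin n → ℝ)))
        ≤ f x - t * |fderiv ℝ f x ((Pi.single i 1 : Fin n → ℝ))| + (L / 2) * t ^ 2 := by
  intro x t ht
  set e : Fin n → ℝ := (Pi.single i 1 : Fin n → ℝ) with he
  have hpos := coordinate_descent_aux n f hf L hL e hlip x t ht
  have hlipneg : ∀ (y : Fin n → ℝ) (h : ℝ),
      |fderiv ℝ f (y + h • (-e)) (-e) - fderiv ℝ f y (-e)| ≤ L * |h| := by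
    intro y h
    have h1 : y + h • (-e) = y + (-h) • e := by rw [smul_neg, neg_smul]
    rw [h1, map_neg, map_neg]
    have := hlip y (-h)
    calc |(-(fderiv ℝ f (y + (-h) • e)) e - -(fderiv ℝ f y) e)|
        = |fderiv ℝ f (y + (-h) • e) e - fderiv ℝ f y e| := by rw [abs_sub_comm]; ring_nf
      _ ≤ L * |(-h)| := this
      _ = L * |h| := by rw [abs_neg]
  have hneg := coordinate_descent_aux n f hf L hL (-e) hlipneg x t ht
  have hxe : x + t • (-e) = x - t • e := by rw [smul_neg]; abel
  rw [hxe, map_neg] at hneg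
  rcases le_or_gt 0 (fderiv ℝ f x e) with hd | hd
  · have habs : |fderiv ℝ f x e| = fderiv ℝ f x e := abs_of_nonneg hd
    calc min (f (x + t • e)) (f (x - t • e)) ≤ f (x - t • e) := min_le_right _ _
      _ ≤ f x + t * (-(fderiv ℝ f x e)) + (L / 2) * t ^ 2 := by simpa using hneg
      _ = f x - t * |fderiv ℝ f x e| + (L / 2) * t ^ 2 := by rw [habs]; ring
  · have habs : |fderiv ℝ f x e| = -(fderiv ℝ f x e) := abs_of_neg hd
    calc min (f (x + t • e)) (f (x - t • e)) ≤ f (x + t • e) := min_le_left _ _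
      _ ≤ f x + t * fderiv ℝ f x e + (L / 2) * t ^ 2 := hpos
      _ = f x - t * |fderiv ℝ f x e| + (L / 2) * t ^ 2 := by rw [habs]; ring
end

section
/- Let f : ℝⁿ → ℝ be differentiable and suppose that for a fixed coordinate i there is L_i > 0 with |∂_i f(x + h e_i) − ∂_i f(x)| ≤ L_i |h| for all x ∈ ℝⁿ and h ∈ ℝ. Then for every x ∈ ℝⁿ, taking the stepsize t = |∂_i f(x)| / L_i, one has min( f(x + t e_i), f(x − t e_i) ) ≤ f(x) − (∂_i f(x))² / (2 L_i). -/
/-!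
Restricted to the line `s ↦ x + s • eᵢ`, `f` becomes a real function `g` whose derivative
`g' s = ∂ᵢf(x + s • eᵢ)` is `Lᵢ`-Lipschitz, so `g s - g 0 - s g' 0 - Lᵢ s² / 2` is antitone
for `s ≥ 0` (the direction `-eᵢ` handles `s ≤ 0`). This is the quadratic upper bound
`g s ≤ g 0 + s g' 0 + Lᵢ s² / 2`, minimised at `s = -g' 0 / Lᵢ`, which is one of the two
steps `±|∂ᵢf(x)| / Lᵢ`.
-/

section LineRestriction

variable {E : Type*} [NormedAddCommGroup E] [NormedSpace ℝ E] {f : E → ℝ} {x v : E} {L : ℝ}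

theorem DifferentiableAt.hasDerivAt_comp_add_smul {t : ℝ} (hf : DifferentiableAt ℝ f (x + t • v)) :
    HasDerivAt (fun s : ℝ => f (x + s • v)) (fderiv ℝ f (x + t • v) v) t := by
  have hline : HasDerivAt (fun s : ℝ => x + s • v) v t := by
    simpa using ((hasDerivAt_id t).smul_const v).const_add x
  exact hf.hasFDerivAt.comp_hasDerivAt t hline

theorem apply_add_smul_le_of_nonneg (hf : Differentiable ℝ f)
    (hlip : ∀ h : ℝ, |fderiv ℝ f (x + h • v) v - fderiv ℝ f x v| ≤ L * |h|)
    {t : ℝ} (ht : 0 ≤ t) :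
    f (x + t • v) ≤ f x + t * fderiv ℝ f x v + L / 2 * t ^ 2 := by
  set ψ : ℝ → ℝ := fun s => f (x + s • v) - s * fderiv ℝ f x v - L / 2 * s ^ 2
  have hψ : ∀ s, HasDerivAt ψ (fderiv ℝ f (x + s • v) v - fderiv ℝ f x v - L * s) s := by
    intro s
    have hquad : HasDerivAt (fun s : ℝ => L / 2 * s ^ 2) (L * s) s :=
      ((hasDerivAt_pow 2 s).const_mul (L / 2)).congr_deriv (by norm_num; ring)
    exact (((hf _).hasDerivAt_comp_add_smul).sub ((hasDerivAt_id s).mul_const _)).sub hquad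
      |>.congr_deriv (by simp)
  have hanti : AntitoneOn ψ (Set.Ici 0) := by
    refine antitoneOn_of_hasDerivWithinAt_nonpos (convex_Ici 0)
      (fun s _ => (hψ s).continuousAt.continuousWithinAt) (fun s _ => (hψ s).hasDerivWithinAt) ?_
    intro s hs
    rw [interior_Ici] at hs
    have := (abs_le.mp (hlip s)).2
    rw [abs_of_pos hs] at this
    linarith
  have hψ0 : ψ 0 = f x := by simp [ψ]
  have key : ψ t ≤ ψ 0 := hanti Set.self_mem_Ici ht ht
  rw [hψ0] at key
  change f (x + t • v) - t * fderiv ℝ f x v - L / 2 * t ^ 2 ≤ f x at key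
  linarith

theorem apply_add_smul_le (hf : Differentiable ℝ f)
    (hlip : ∀ h : ℝ, |fderiv ℝ f (x + h • v) v - fderiv ℝ f x v| ≤ L * |h|) (t : ℝ) :
    f (x + t • v) ≤ f x + t * fderiv ℝ f x v + L / 2 * t ^ 2 := by
  rcases le_total 0 t with ht | ht
  · exact apply_add_smul_le_of_nonneg hf hlip ht
  · have hlip_neg : ∀ h : ℝ, |fderiv ℝ f (x + h • -v) (-v) - fderiv ℝ f x (-v)| ≤ L * |h| := by
      intro h
      simpa [smul_neg, ← neg_smul, abs_sub_comm, neg_add_eq_sub] using hlip (-h)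
    simpa [smul_neg, ← neg_smul] using apply_add_smul_le_of_nonneg hf hlip_neg (neg_nonneg.mpr ht)

theorem apply_sub_fderiv_div_smul_le (hf : Differentiable ℝ f) (hL : 0 < L)
    (hlip : ∀ h : ℝ, |fderiv ℝ f (x + h • v) v - fderiv ℝ f x v| ≤ L * |h|) :
    f (x + (-fderiv ℝ f x v / L) • v) ≤ f x - fderiv ℝ f x v ^ 2 / (2 * L) := by
  refine (apply_add_smul_le hf hlip _).trans_eq ?_
  field_simp
  ring

end LineRestriction

theorem min_apply_abs_apply_neg_abs_le {β : Type*} [LinearOrder β] (g : ℝ → β) (a : ℝ) :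
    min (g |a|) (g (-|a|)) ≤ g a := by
  rcases abs_choice a with h | h
  · exact (min_le_left _ _).trans_eq (by rw [h])
  · exact (min_le_right _ _).trans_eq (by rw [h, neg_neg])

/-- With the optimal stepsize `t = |∂ᵢf(x)|/Lᵢ`, one step of two-sided coordinate search
decreases `f` by at least `(∂ᵢf(x))²/(2Lᵢ)`. -/
theorem coordinate_optimal_stepsize_decrease
    (n : ℕ) (f : (Fin n → ℝ) → ℝ) (hf : Differentiable ℝ f)
    (i : Fin n) (L : ℝ) (hL : 0 < L)
    (hlip : ∀ (x : Fin n → ℝ) (h : ℝ),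
      |fderiv ℝ f (x + h • (Pi.single i 1 : Fin n → ℝ)) ((Pi.single i 1 : Fin n → ℝ))
          - fderiv ℝ f x ((Pi.single i 1 : Fin n → ℝ))| ≤ L * |h|) :
    ∀ x : Fin n → ℝ,
      min (f (x + (|fderiv ℝ f x ((Pi.single i 1 : Fin n → ℝ))| / L) • (Pi.single i 1 : Fin n → ℝ)))
          (f (x - (|fderiv ℝ f x ((Pi.single i 1 : Fin n → ℝ))| / L) • (Pi.single i 1 : Fin n → ℝ)))
        ≤ f x - (fderiv ℝ f x ((Pi.single i 1 : Fin n → ℝ))) ^ 2 / (2 * L) := by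
  intro x
  set e : Fin n → ℝ := Pi.single i 1
  set d := fderiv ℝ f x e
  have habs : |-d / L| = |d| / L := by rw [abs_div, abs_neg, abs_of_pos hL]
  calc _ = min (f (x + |-d / L| • e)) (f (x + (-|-d / L|) • e)) := by
          rw [habs, neg_smul, ← sub_eq_add_neg]
    _ ≤ f (x + (-d / L) • e) := min_apply_abs_apply_neg_abs_le (fun s => f (x + s • e)) _
    _ ≤ f x - d ^ 2 / (2 * L) := apply_sub_fderiv_div_smul_le hf hL (hlip x)
end

section
/- Let f : ℝⁿ → ℝ be differentiable with coordinate-wise Lipschitz gradient with constants L_1,…,L_n > 0, let S = ∑_{i=1}^n L_i, and let p_i = L_i/S be the importance sampling probabilities. Then for every x ∈ ℝⁿ, ∑_{i=1}^n p_i · min( f(x + t_i e_i), f(x − t_i e_i) ) ≤ f(x) − ‖∇f(x)‖₂² / (2S), where t_i = |∂_i f(x)| / L_i. -/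
/-!
Along the line `s ↦ x + s • eᵢ`, a derivative that is `Lᵢ`-Lipschitz gives the quadratic upper
bound `f (x + s • eᵢ) ≤ f x + gᵢ s + Lᵢ s² / 2` with `gᵢ = ∂ᵢ f x`; its minimiser `s = -gᵢ / Lᵢ` is
one of the two trial steps `±|gᵢ| / Lᵢ`, so the better of them decreases `f` by at least
`gᵢ² / (2 Lᵢ)`. Averaging with weights `Lᵢ / S` makes the `Lᵢ` cancel.
-/

open Set

theorem le_add_deriv_mul_add_sq_of_abs_deriv_sub_le {φ φ' : ℝ → ℝ} {L : ℝ}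
    (hφ : ∀ s, HasDerivAt φ (φ' s) s) (hφ' : ∀ s, |φ' s - φ' 0| ≤ L * |s|) (t : ℝ) :
    φ t ≤ φ 0 + φ' 0 * t + L / 2 * t ^ 2 := by
  -- `ψ'` has the sign of `s`, so `ψ` is smallest at `0`, where it vanishes.
  set ψ : ℝ → ℝ := fun s ↦ φ 0 + φ' 0 * s + L / 2 * s ^ 2 - φ s
  have hψ (s : ℝ) : HasDerivAt ψ (φ' 0 + L * s - φ' s) s := by
    refine (((((hasDerivAt_id s).const_mul (φ' 0)).const_add (φ 0)).add
      ((hasDerivAt_pow 2 s).const_mul (L / 2))).sub (hφ s)).congr_deriv ?_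
    norm_num
    ring
  have hcont : Continuous ψ := continuous_iff_continuousAt.2 fun s ↦ (hψ s).continuousAt
  have hψ0 : ψ 0 = 0 := by simp [ψ]
  suffices 0 ≤ ψ t by simp only [ψ] at this; linarith
  rcases le_total 0 t with ht | ht
  · refine hψ0 ▸ monotoneOn_of_hasDerivWithinAt_nonneg (convex_Ici 0) hcont.continuousOn
      (fun s _ ↦ (hψ s).hasDerivWithinAt) (fun s hs ↦ ?_) self_mem_Ici ht ht
    rw [interior_Ici, mem_Ioi] at hs
    have := (le_abs_self _).trans (hφ' s)
    rw [abs_of_pos hs] at this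
    linarith
  · refine hψ0 ▸ antitoneOn_of_hasDerivWithinAt_nonpos (convex_Iic 0) hcont.continuousOn
      (fun s _ ↦ (hψ s).hasDerivWithinAt) (fun s hs ↦ ?_) ht self_mem_Iic ht
    rw [interior_Iic, mem_Iio] at hs
    have := (neg_le_abs _).trans (hφ' s)
    rw [abs_of_neg hs] at this
    linarith

section Line

variable {E : Type*} [NormedAddCommGroup E] [NormedSpace ℝ E] {f : E → ℝ} {x v : E} {L : ℝ}

theorem le_add_fderiv_mul_add_sq_of_abs_fderiv_sub_le (hf : Differentiable ℝ f)
    (hL : ∀ h : ℝ, |fderiv ℝ f (x + h • v) v - fderiv ℝ f x v| ≤ L * |h|) (t : ℝ) :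
    f (x + t • v) ≤ f x + fderiv ℝ f x v * t + L / 2 * t ^ 2 := by
  have hline (s : ℝ) : HasDerivAt (fun s : ℝ ↦ x + s • v) v s := by
    simpa using ((hasDerivAt_id s).smul_const v).const_add x
  simpa using le_add_deriv_mul_add_sq_of_abs_deriv_sub_le (φ := fun s ↦ f (x + s • v))
    (fun s ↦ (hf _).hasFDerivAt.comp_hasDerivAt s (hline s)) (by simpa using hL) t

theorem min_apply_add_sub_abs_fderiv_div_smul_le (hf : Differentiable ℝ f) (hL₀ : 0 < L)
    (hL : ∀ h : ℝ, |fderiv ℝ f (x + h • v) v - fderiv ℝ f x v| ≤ L * |h|) :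
    min (f (x + (|fderiv ℝ f x v| / L) • v)) (f (x - (|fderiv ℝ f x v| / L) • v))
      ≤ f x - fderiv ℝ f x v ^ 2 / (2 * L) := by
  set g := fderiv ℝ f x v
  have hmin : min (f (x + (|g| / L) • v)) (f (x - (|g| / L) • v)) ≤ f (x + (-g / L) • v) := by
    rcases abs_choice g with hg | hg
    · exact (min_le_right _ _).trans_eq (by rw [hg, neg_div, neg_smul, sub_eq_add_neg])
    · exact (min_le_left _ _).trans_eq (by rw [hg])
  refine hmin.trans ((le_add_fderiv_mul_add_sq_of_abs_fderiv_sub_le hf hL _).trans_eq ?_)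
  field_simp
  ring

end Line

/-- Expected decrease of `STP_IS` with the optimal coordinate stepsizes
`tᵢ = |∂ᵢf(x)|/Lᵢ` and importance sampling probabilities `pᵢ = Lᵢ/S`:
`∑ᵢ pᵢ min(f(x + tᵢeᵢ), f(x − tᵢeᵢ)) ≤ f(x) − ‖∇f(x)‖₂²/(2S)`. -/
theorem stp_is_expected_decrease_optimal_stepsize
    (n : ℕ) (hn : 0 < n) (f : (Fin n → ℝ) → ℝ) (hf : Differentiable ℝ f)
    (L : Fin n → ℝ) (hL : ∀ i, 0 < L i)
    (hlip : ∀ (i : Fin n) (x : Fin n → ℝ) (h : ℝ),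
      |fderiv ℝ f (x + h • (Pi.single i 1 : Fin n → ℝ)) ((Pi.single i 1 : Fin n → ℝ))
          - fderiv ℝ f x ((Pi.single i 1 : Fin n → ℝ))| ≤ L i * |h|) :
    ∀ x : Fin n → ℝ,
      ∑ i, (L i / ∑ j, L j) *
        min (f (x + (|fderiv ℝ f x ((Pi.single i 1 : Fin n → ℝ))| / L i) • (Pi.single i 1 : Fin n → ℝ)))
            (f (x - (|fderiv ℝ f x ((Pi.single i 1 : Fin n → ℝ))| / L i) • (Pi.single i 1 : Fin n → ℝ)))
        ≤ f x - (∑ i, (fderiv ℝ f x ((Pi.single i 1 : Fin n → ℝ))) ^ 2) / (2 * ∑ j, L j) := by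
  intro x
  set S := ∑ j, L j
  set g : Fin n → ℝ := fun i ↦ fderiv ℝ f x (Pi.single i 1)
  have hS : 0 < S := Finset.sum_pos (fun i _ ↦ hL i) ⟨⟨0, hn⟩, Finset.mem_univ _⟩
  calc _ ≤ ∑ i, L i / S * (f x - g i ^ 2 / (2 * L i)) := by
        gcongr with i
        · exact div_nonneg (hL i).le hS.le
        · exact min_apply_add_sub_abs_fderiv_div_smul_le hf (hL i) (hlip i x)
    _ = (∑ i, L i) / S * f x - (∑ i, g i ^ 2) / (2 * S) := by
        rw [Finset.sum_div, Finset.sum_mul, Finset.sum_div, ← Finset.sum_sub_distrib]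
        refine Finset.sum_congr rfl fun i _ ↦ ?_
        field_simp [(hL i).ne']
    _ = f x - (∑ i, g i ^ 2) / (2 * S) := by rw [div_self hS.ne', one_mul]
end

section
/- Let f : ℝⁿ → ℝ be differentiable with coordinate-wise Lipschitz gradient with constants L_1,…,L_n > 0. Then for every x ∈ ℝⁿ and every t ≥ 0, under uniform sampling of coordinates, (1/n)·∑_{i=1}^n min( f(x + t e_i), f(x − t e_i) ) ≤ f(x) − (t/n)·‖∇f(x)‖₁ + (t²/(2n))·∑_{i=1}^n L_i, where ‖∇f(x)‖₁ = ∑_{i=1}^n |∂_i f(x)|. -/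
/-!
Along each coordinate line the restriction of `f` has an `L i`-Lipschitz derivative, so the
one-dimensional descent lemma bounds `f (x ± t eᵢ)` by `f x ± t ∂ᵢf(x) + L i t² / 2`. Taking the
sign opposite to that of `∂ᵢf(x)` bounds the minimum by `f x - t |∂ᵢf(x)| + L i t² / 2`;
averaging over `i` gives the claim.
-/

open Set

theorem le_add_deriv_mul_add_of_deriv_le {g g' : ℝ → ℝ} {L t : ℝ} (ht : 0 ≤ t)
    (hderiv : ∀ s ∈ Icc 0 t, HasDerivAt g (g' s) s)
    (hbound : ∀ s ∈ Ico 0 t, g' s ≤ g' 0 + L * s) :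
    g t ≤ g 0 + g' 0 * t + L * t ^ 2 / 2 := by
  have hquad : ∀ s, HasDerivAt (fun s => g 0 + g' 0 * s + L * s ^ 2 / 2) (g' 0 + L * s) s := by
    intro s
    refine ((((hasDerivAt_id' s).const_mul (g' 0)).const_add (g 0)).add
      (((hasDerivAt_pow 2 s).const_mul L).div_const 2)).congr_deriv ?_
    norm_num
    ring
  refine image_le_of_deriv_right_le_deriv_boundary (a := 0) (b := t)
    (fun s hs => (hderiv s hs).continuousAt.continuousWithinAt)
    (fun s hs => (hderiv s (Ico_subset_Icc_self hs)).hasDerivWithinAt) (by simp)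
    (fun s _ => (hquad s).continuousAt.continuousWithinAt)
    (fun s _ => (hquad s).hasDerivWithinAt) hbound (right_mem_Icc.mpr ht)

section LineRestriction

variable {E : Type*} [NormedAddCommGroup E] [NormedSpace ℝ E] {f : E → ℝ}

theorem le_add_fderiv_mul_add_of_fderiv_le (hf : Differentiable ℝ f) {x v : E} {L t : ℝ}
    (ht : 0 ≤ t) (hbound : ∀ s, 0 ≤ s → fderiv ℝ f (x + s • v) v ≤ fderiv ℝ f x v + L * s) :
    f (x + t • v) ≤ f x + t * fderiv ℝ f x v + L * t ^ 2 / 2 := by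
  have hline : ∀ s : ℝ, HasDerivAt (fun s : ℝ => x + s • v) v s := fun s => by
    simpa using ((hasDerivAt_id s).smul_const v).const_add x
  have h := le_add_deriv_mul_add_of_deriv_le (g := fun s => f (x + s • v))
    (g' := fun s => fderiv ℝ f (x + s • v) v) ht
    (fun s _ => (hf _).hasFDerivAt.comp_hasDerivAt s (hline s))
    (fun s hs => by simpa using hbound s hs.1)
  simpa [mul_comm t] using h

theorem min_le_sub_abs_fderiv_mul_add (hf : Differentiable ℝ f) {x v : E} {L t : ℝ}
    (ht : 0 ≤ t) (hlip : ∀ h : ℝ, |fderiv ℝ f (x + h • v) v - fderiv ℝ f x v| ≤ L * |h|) :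
    min (f (x + t • v)) (f (x - t • v)) ≤ f x - t * |fderiv ℝ f x v| + L * t ^ 2 / 2 := by
  have hplus := le_add_fderiv_mul_add_of_fderiv_le hf ht fun s hs => by
    have := (le_abs_self _).trans (hlip s)
    rw [abs_of_nonneg hs] at this
    linarith
  have hminus := le_add_fderiv_mul_add_of_fderiv_le (v := -v) hf ht fun s hs => by
    have := (neg_abs_le _).trans' (neg_le_neg (hlip (-s)))
    rw [abs_neg, abs_of_nonneg hs] at this
    simp only [smul_neg, ← neg_smul, map_neg]
    linarith
  rw [smul_neg, ← sub_eq_add_neg, map_neg] at hminus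
  rcases le_total 0 (fderiv ℝ f x v) with hpos | hneg
  · rw [abs_of_nonneg hpos]
    exact (min_le_right _ _).trans (by linarith)
  · rw [abs_of_nonpos hneg]
    exact (min_le_left _ _).trans (by linarith)

end LineRestriction

theorem stp_uniform_expected_decrease_general
    (n : ℕ) (hn : 0 < n) (f : (Fin n → ℝ) → ℝ) (hf : Differentiable ℝ f)
    (L : Fin n → ℝ)
    (hlip : ∀ (i : Fin n) (x : Fin n → ℝ) (h : ℝ),
      |fderiv ℝ f (x + h • (Pi.single i 1 : Fin n → ℝ)) ((Pi.single i 1 : Fin n → ℝ))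
          - fderiv ℝ f x ((Pi.single i 1 : Fin n → ℝ))| ≤ L i * |h|) :
    ∀ (x : Fin n → ℝ) (t : ℝ), 0 ≤ t →
      (1 / (n : ℝ)) * ∑ i, min (f (x + t • (Pi.single i 1 : Fin n → ℝ))) (f (x - t • (Pi.single i 1 : Fin n → ℝ)))
        ≤ f x - (t / (n : ℝ)) * (∑ i, |fderiv ℝ f x ((Pi.single i 1 : Fin n → ℝ))|)
            + (t ^ 2 / (2 * (n : ℝ))) * ∑ i, L i := by
  intro x t ht
  have hn' : (n : ℝ) ≠ 0 := by positivity
  calc (1 / (n : ℝ)) * ∑ i, min (f (x + t • (Pi.single i 1 : Fin n → ℝ)))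
          (f (x - t • (Pi.single i 1 : Fin n → ℝ)))
      ≤ (1 / (n : ℝ)) * ∑ i, (f x - t * |fderiv ℝ f x (Pi.single i 1)| + L i * t ^ 2 / 2) := by
        gcongr with i
        exact min_le_sub_abs_fderiv_mul_add hf ht (hlip i x)
    _ = _ := by
        simp only [Finset.sum_add_distrib, Finset.sum_sub_distrib, Finset.sum_const,
          Finset.card_univ, Fintype.card_fin, nsmul_eq_mul, ← Finset.mul_sum, ← Finset.sum_div,
          ← Finset.sum_mul]
        field_simp

/-- Expected decrease of `STP` with uniform coordinate sampling and stepsize `t ≥ 0`: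
`(1/n)∑ᵢ min(f(x + t eᵢ), f(x − t eᵢ)) ≤ f(x) − (t/n)‖∇f(x)‖₁ + (t²/(2n))∑ᵢ Lᵢ`. -/
theorem stp_uniform_expected_decrease
    (n : ℕ) (hn : 0 < n) (f : (Fin n → ℝ) → ℝ) (hf : Differentiable ℝ f)
    (L : Fin n → ℝ) (hL : ∀ i, 0 < L i)
    (hlip : ∀ (i : Fin n) (x : Fin n → ℝ) (h : ℝ),
      |fderiv ℝ f (x + h • (Pi.single i 1 : Fin n → ℝ)) ((Pi.single i 1 : Fin n → ℝ))
          - fderiv ℝ f x ((Pi.single i 1 : Fin n → ℝ))| ≤ L i * |h|) :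
    ∀ (x : Fin n → ℝ) (t : ℝ), 0 ≤ t →
      (1 / (n : ℝ)) * ∑ i, min (f (x + t • (Pi.single i 1 : Fin n → ℝ))) (f (x - t • (Pi.single i 1 : Fin n → ℝ)))
        ≤ f x - (t / (n : ℝ)) * (∑ i, |fderiv ℝ f x ((Pi.single i 1 : Fin n → ℝ))|)
            + (t ^ 2 / (2 * (n : ℝ))) * ∑ i, L i :=
  stp_uniform_expected_decrease_general n hn f hf L hlip
end

section
/- Let S > 0, α > 0, f* ∈ ℝ, and let (f_k)_{k≥0} and (g_k)_{k≥0} be real sequences with g_k ≥ 0 and f_k ≥ f* for all k, satisfying the per-iteration decrease f_{k+1} ≤ f_k − (α/S)·g_k + α²/(2S) for all k. Then for every K ≥ 1, min_{0 ≤ k < K} g_k ≤ S·(f_0 − f*)/(α·K) + α/2. -/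
/-- Telescoping argument for the nonconvex rate of `STP_IS` with fixed stepsize:
if `f_{k+1} ≤ f_k − (α/S) g_k + α²/(2S)` with `g_k ≥ 0`, `f_k ≥ f*`, then
`min_{0 ≤ k < K} g_k ≤ S(f₀ − f*)/(αK) + α/2`. -/
theorem stp_is_nonconvex_rate_fixed_stepsize
    (S α fstar : ℝ) (hS : 0 < S) (hα : 0 < α)
    (f g : ℕ → ℝ) (hg : ∀ k, 0 ≤ g k) (hfl : ∀ k, fstar ≤ f k)
    (hdec : ∀ k, f (k + 1) ≤ f k - (α / S) * g k + α ^ 2 / (2 * S))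
    (K : ℕ) (hK : 1 ≤ K) :
    (Finset.range K).inf' (Finset.nonempty_range_iff.mpr (by omega)) g
      ≤ S * (f 0 - fstar) / (α * K) + α / 2 := by
  have hsum : ∀ n : ℕ, (α / S) * ∑ k ∈ Finset.range n, g k
      ≤ f 0 - f n + n * (α ^ 2 / (2 * S)) := by
    intro n
    induction n with
    | zero => simp
    | succ n ih =>
      rw [Finset.sum_range_succ, mul_add]
      have := hdec n
      push_cast
      nlinarith
  set m := (Finset.range K).inf' (Finset.nonempty_range_iff.mpr (by omega)) g with hm
  have hmle : (K : ℝ) * m ≤ ∑ k ∈ Finset.range K, g k := by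
    calc (K : ℝ) * m = ∑ _k ∈ Finset.range K, m := by
          simp [mul_comm]
      _ ≤ ∑ k ∈ Finset.range K, g k :=
          Finset.sum_le_sum (fun k hk => Finset.inf'_le g hk)
  have hsumK := hsum K
  have hKpos : (0:ℝ) < K := by exact_mod_cast hK
  have hfK := hfl K
  have h2 : α * ∑ k ∈ Finset.range K, g k ≤ S * (f 0 - f K) + K * α ^ 2 / 2 := by
    have h := mul_le_mul_of_nonneg_right hsumK hS.le
    have e1 : α / S * (∑ k ∈ Finset.range K, g k) * S = α * ∑ k ∈ Finset.range K, g k := by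
      field_simp
    have e2 : (f 0 - f K + (K:ℝ) * (α ^ 2 / (2 * S))) * S
        = S * (f 0 - f K) + (K:ℝ) * α ^ 2 / 2 := by
      field_simp
    rw [e1, e2] at h
    exact h
  have h3 : α * ((K:ℝ) * m) ≤ α * ∑ k ∈ Finset.range K, g k :=
    mul_le_mul_of_nonneg_left hmle hα.le
  calc m ≤ (S * (f 0 - fstar) + (α * K) * (α / 2)) / (α * K) := by
        rw [le_div_iff₀ (by positivity)]
        nlinarith
    _ = S * (f 0 - fstar) / (α * K) + α / 2 := by
        rw [add_div, mul_div_assoc, mul_div_cancel_left₀ _ (by positivity : (α * (K:ℝ)) ≠ 0)]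
end
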